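/- Let (Y2(0)−Y1(0), S1, S2, D1, D2) have finite second moments with ΔD = D2 − D1 independent of (Y2(0)−Y1(0), S1, S2, D1) (joint independence including D1), and define ΔY via the linear model in levels. If V(ΔD) > 0, then cov(ΔD, ΔY)/V(ΔD) = E(S2). -/

import Mathlib

open MeasureTheory ProbabilityTheory

noncomputable def cov {Ω : Type*} [MeasurableSpace Ω] (μ : Measure Ω) (X Y : Ω → ℝ) : ℝ :=
  ∫ ω, (X ω - ∫ x, X x ∂μ) * (Y ω - ∫ x, Y x ∂μ) ∂μ

noncomputable def var {Ω : Type*} [MeasurableSpace Ω] (μ : Measure Ω) (X : Ω → ℝ) : ℝ :=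
  cov μ X X

/-- Conditional expectation of `X` given the σ-algebra generated by `W`. -/
noncomputable def cexp {Ω E : Type*} [MeasurableSpace Ω] [MeasurableSpace E]
    (μ : Measure Ω) (W : Ω → E) (X : Ω → ℝ) : Ω → ℝ :=
  μ[X | MeasurableSpace.comap W inferInstance]

/-- Conditional variance of `X` given the σ-algebra generated by `W`. -/
noncomputable def cvar {Ω E : Type*} [MeasurableSpace Ω] [MeasurableSpace E]
    (μ : Measure Ω) (W : Ω → E) (X : Ω → ℝ) : Ω → ℝ :=
  cexp μ W (fun ω => (X ω - cexp μ W X ω) ^ 2)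

lemma memLp_mul_integrable {Ω : Type*} [MeasurableSpace Ω] {μ : Measure Ω}
    {f g : Ω → ℝ} (hf : MemLp f 2 μ) (hg : MemLp g 2 μ) :
    Integrable (fun ω => f ω * g ω) μ := by
  rw [← memLp_one_iff_integrable]
  have := MemLp.smul (r := 1) hg hf
    (hpqr := ⟨by simp only [inv_one]; rw [ENNReal.inv_two_add_inv_two]⟩)
  exact this

lemma cov_eq {Ω : Type*} [MeasurableSpace Ω] (μ : Measure Ω) [IsProbabilityMeasure μ]
    {X Y : Ω → ℝ} (hX : Integrable X μ) (hY : Integrable Y μ)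
    (hXY : Integrable (fun ω => X ω * Y ω) μ) :
    cov μ X Y = (∫ ω, X ω * Y ω ∂μ) - (∫ ω, X ω ∂μ) * (∫ ω, Y ω ∂μ) := by
  unfold cov
  set a := ∫ x, X x ∂μ
  set b := ∫ x, Y x ∂μ
  have h : ∀ ω, (X ω - a) * (Y ω - b)
      = X ω * Y ω - a * Y ω - (X ω * b - a * b) := by intro ω; ring
  simp_rw [h]
  have h1 : Integrable (fun ω => X ω * Y ω - a * Y ω) μ := hXY.sub (hY.const_mul a)
  have h2 : Integrable (fun ω => X ω * b - a * b) μ := (hX.mul_const b).sub (integrable_const _)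
  have h3 : Integrable (fun ω => a * Y ω) μ := hY.const_mul a
  have h4 : Integrable (fun ω => X ω * b) μ := hX.mul_const b
  rw [integral_sub h1 h2, integral_sub hXY h3, integral_sub h4 (integrable_const (a * b)),
    integral_const_mul, integral_mul_const, integral_const]
  simp [a, b]

/-- Under the stronger independence condition `ΔD ⊥ (Y2(0)−Y1(0), S1, S2, D1)`, the
first-difference coefficient identifies `E(S2)`. -/
theorem stmt14 {Ω : Type*} [MeasurableSpace Ω] (μ : Measure Ω) [IsProbabilityMeasure μ]
    (Y10 Y20 S1 S2 D1 D2 : Ω → ℝ)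
    (hY10 : MemLp Y10 2 μ) (hY20 : MemLp Y20 2 μ) (hS1 : MemLp S1 2 μ)
    (hS2 : MemLp S2 2 μ) (hD1 : MemLp D1 2 μ) (hD2 : MemLp D2 2 μ)
    (hind : IndepFun (fun ω => D2 ω - D1 ω)
      (fun ω => (Y20 ω - Y10 ω, S1 ω, S2 ω, D1 ω)) μ)
    (hvar : 0 < var μ (fun ω => D2 ω - D1 ω)) :
    cov μ (fun ω => D2 ω - D1 ω)
        (fun ω => (Y20 ω + S2 ω * D2 ω) - (Y10 ω + S1 ω * D1 ω)) /
      var μ (fun ω => D2 ω - D1 ω)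
    = ∫ ω, S2 ω ∂μ := by
  set ΔD : Ω → ℝ := fun ω => D2 ω - D1 ω with hΔD
  set A : Ω → ℝ := fun ω => (Y20 ω - Y10 ω) + (S2 ω - S1 ω) * D1 ω with hA
  have hΔD2 : MemLp ΔD 2 μ := hD2.sub hD1
  have hAint : Integrable A μ :=
    ((hY20.sub hY10).integrable (by norm_num)).add (memLp_mul_integrable (hS2.sub hS1) hD1)
  -- independence facts
  have hWmap : ∀ {g : ℝ × ℝ × ℝ × ℝ → ℝ}, Measurable g →
      IndepFun ΔD (fun ω => g (Y20 ω - Y10 ω, S1 ω, S2 ω, D1 ω)) μ := by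
    intro g hg
    exact hind.comp measurable_id hg
  have hIA : IndepFun ΔD A μ := by
    have := hWmap (g := fun w => w.1 + (w.2.2.1 - w.2.1) * w.2.2.2) (by fun_prop)
    simpa [A] using this
  have hIS2 : IndepFun ΔD S2 μ := by
    have := hWmap (g := fun w => w.2.2.1) (by fun_prop)
    simpa using this
  have hIsq : IndepFun (fun ω => ΔD ω ^ 2) S2 μ := by
    have := hind.comp (φ := fun x : ℝ => x ^ 2) (ψ := fun w => w.2.2.1) (by fun_prop) (by fun_prop)
    simpa [Function.comp_def] using this
  have hΔDm : AEStronglyMeasurable ΔD μ := hΔD2.aestronglyMeasurable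
  have hS2m : AEStronglyMeasurable S2 μ := hS2.aestronglyMeasurable
  -- integral identities
  have e1 : (∫ ω, ΔD ω * A ω ∂μ) = (∫ ω, ΔD ω ∂μ) * (∫ ω, A ω ∂μ) :=
    hIA.integral_fun_mul_eq_mul_integral hΔDm hAint.aestronglyMeasurable
  have e2 : (∫ ω, ΔD ω * S2 ω ∂μ) = (∫ ω, ΔD ω ∂μ) * (∫ ω, S2 ω ∂μ) :=
    hIS2.integral_fun_mul_eq_mul_integral hΔDm hS2m
  have e3 : (∫ ω, ΔD ω ^ 2 * S2 ω ∂μ) = (∫ ω, ΔD ω ^ 2 ∂μ) * (∫ ω, S2 ω ∂μ) :=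
    hIsq.integral_fun_mul_eq_mul_integral (hΔDm.pow 2) hS2m
  -- key decomposition of ΔY
  have hYdecomp : ∀ ω, (Y20 ω + S2 ω * D2 ω) - (Y10 ω + S1 ω * D1 ω)
      = A ω + S2 ω * ΔD ω := by intro ω; simp [A, ΔD]; ring
  -- integrabilities
  have hΔDint : Integrable ΔD μ := hΔD2.integrable (by norm_num)
  have hS2int : Integrable S2 μ := hS2.integrable (by norm_num)
  have hS2ΔD : Integrable (fun ω => S2 ω * ΔD ω) μ := memLp_mul_integrable hS2 hΔD2
  have hΔDA : Integrable (fun ω => ΔD ω * A ω) μ := hIA.integrable_mul hΔDint hAint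
  have hsq : Integrable (fun ω => ΔD ω ^ 2) μ := hΔD2.integrable_sq
  have hΔDS2ΔD : Integrable (fun ω => ΔD ω ^ 2 * S2 ω) μ := hIsq.integrable_mul hsq hS2int
  have hΔY : Integrable (fun ω => A ω + S2 ω * ΔD ω) μ := hAint.add hS2ΔD
  have hΔDΔY : Integrable (fun ω => ΔD ω * (A ω + S2 ω * ΔD ω)) μ := by
    have : (fun ω => ΔD ω * (A ω + S2 ω * ΔD ω))
        = fun ω => ΔD ω * A ω + ΔD ω ^ 2 * S2 ω := by funext ω; ring
    rw [this]; exact hΔDA.add hΔDS2ΔD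
  -- compute covariance
  have hcov : cov μ ΔD (fun ω => (Y20 ω + S2 ω * D2 ω) - (Y10 ω + S1 ω * D1 ω))
      = (∫ ω, S2 ω ∂μ) * var μ ΔD := by
    have hcongr : cov μ ΔD (fun ω => (Y20 ω + S2 ω * D2 ω) - (Y10 ω + S1 ω * D1 ω))
        = cov μ ΔD (fun ω => A ω + S2 ω * ΔD ω) := by
      unfold cov
      simp_rw [hYdecomp]
    rw [hcongr, cov_eq μ hΔDint hΔY hΔDΔY]
    have hmulsplit : (∫ ω, ΔD ω * (A ω + S2 ω * ΔD ω) ∂μ)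
        = (∫ ω, ΔD ω * A ω ∂μ) + (∫ ω, ΔD ω ^ 2 * S2 ω ∂μ) := by
      rw [← integral_add hΔDA hΔDS2ΔD]
      congr 1; funext ω; ring
    have haddsplit : (∫ ω, A ω + S2 ω * ΔD ω ∂μ)
        = (∫ ω, A ω ∂μ) + (∫ ω, S2 ω * ΔD ω ∂μ) := integral_add hAint hS2ΔD
    have e2' : (∫ ω, S2 ω * ΔD ω ∂μ) = (∫ ω, ΔD ω ∂μ) * (∫ ω, S2 ω ∂μ) := by
      rw [← e2]; congr 1; funext ω; ring
    have hvareq : var μ ΔD = (∫ ω, ΔD ω ^ 2 ∂μ) - (∫ ω, ΔD ω ∂μ) ^ 2 := by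
      unfold var
      rw [cov_eq μ hΔDint hΔDint (by simpa [sq] using hsq)]
      simp [sq]
    rw [hmulsplit, haddsplit, e1, e3, e2', hvareq]
    ring
  rw [hcov]
  field_simp
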